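/- There do not exist positive integers n_1, n_2, n_3 with n_1 + n_2 + n_3 = n such that D(C_n, x) = D(C_{n_1}, x)·D(C_{n_2}, x)·D(C_{n_3}, x), in the case n ≡ 2 (mod 4) and n_1 ≡ n_2 ≡ n_3 ≡ 2 (mod 4). -/

import Mathlib

open Polynomial SimpleGraph

/-- `S` is a dominating set of `G`: every vertex is in `S` or adjacent to a vertex of `S`. -/
def IsDomSet {V : Type*} (G : SimpleGraph V) (S : Finset V) : Prop :=
  ∀ v : V, v ∈ S ∨ ∃ u ∈ S, G.Adj u v

/-- The domination polynomial `D(G,x) = ∑ d(G,i) xⁱ`. -/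
noncomputable def domPoly {V : Type*} [Fintype V] (G : SimpleGraph V) : Polynomial ℤ :=
  ∑ i ∈ Finset.range (Fintype.card V + 1),
    (Nat.card {S : Finset V // IsDomSet G S ∧ S.card = i} : ℤ) • (X : Polynomial ℤ) ^ i

/-
A subset of the cycle `C_m` is a cyclic binary word, and it is dominating exactly when the word has
no three cyclically consecutive `false`s. Splitting off the first two letters `a b` turns the cyclic
condition into a linear one on `a b l a b`, and a transfer recursion over `l` shows
`D(C_{m+5}) = x (D(C_{m+4}) + D(C_{m+3}) + D(C_{m+2}))`.

Along this recursion the jet `(D(-1), D'(-1), D''(-1))` is explicit on each residue class mod 4;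
for `m = 4k + 2` it is `(-1, 0, (2k+1)(2k+2))`. By the Leibniz rule the jet of a product of three
such polynomials is `(-1, 0, ∑ (2kᵢ+1)(2kᵢ+2))`, while `D(C_n)` with `n = 4K + 2`,
`K = k₁ + k₂ + k₃ + 1`, has `D''(-1) = (2K+1)(2K+2)`, which is strictly larger.
-/

open Finset

theorem domPoly_eq_sum {V : Type*} [Fintype V] [DecidableEq V] (G : SimpleGraph V)
    [DecidablePred (IsDomSet G)] : domPoly G = ∑ S with IsDomSet G S, X ^ #S := by
  have hcard : ∀ S ∈ ({S | IsDomSet G S} : Finset (Finset V)),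
      #S ∈ range (Fintype.card V + 1) := fun S _ =>
    mem_range_succ_iff.2 (card_le_univ S)
  rw [domPoly, ← sum_fiberwise_of_maps_to hcard]
  refine sum_congr rfl fun i _ => ?_
  rw [Nat.card_eq_fintype_card, Fintype.card_subtype, filter_filter,
    sum_congr rfl fun S hS => by rw [(mem_filter.1 hS).2.2], sum_const, natCast_zsmul]

theorem isDomSet_cycleGraph_iff {m : ℕ} (S : Finset (Fin (m + 2))) :
    IsDomSet (cycleGraph (m + 2)) S ↔ ∀ v, v ∈ S ∨ v + 1 ∈ S ∨ v + 1 + 1 ∈ S := by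
  have hadj : ∀ u v, (cycleGraph (m + 2)).Adj u v ↔ u = v - 1 ∨ u = v + 1 := fun u v => by
    rw [adj_comm, ← mem_neighborSet, cycleGraph_neighborSet]; rfl
  simp only [IsDomSet, hadj]
  refine ⟨fun h v => ?_, fun h v => ?_⟩
  · rcases h (v + 1) with h | ⟨u, hu, rfl | rfl⟩
    · exact Or.inr (Or.inl h)
    · exact Or.inl (by simpa using hu)
    · exact Or.inr (Or.inr hu)
  · rcases h (v - 1) with h | h | h
    · exact Or.inr ⟨v - 1, h, Or.inl rfl⟩
    · exact Or.inl (by simpa using h)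
    · exact Or.inr ⟨v - 1 + 1 + 1, h, Or.inr (by rw [sub_add_cancel])⟩

def avoidsFFF : List Bool → Bool
  | a :: b :: c :: l => (a || b || c) && avoidsFFF (b :: c :: l)
  | _ => true

theorem avoidsFFF_iff : ∀ l : List Bool, avoidsFFF l = true ↔
    ∀ i, i + 3 ≤ l.length →
      (l.getD i false || l.getD (i + 1) false || l.getD (i + 2) false) = true
  | [] | [_] | [_, _] => by simp [avoidsFFF]
  | a :: b :: c :: l => by
    rw [avoidsFFF, Bool.and_eq_true, avoidsFFF_iff (b :: c :: l)]
    constructor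
    · rintro ⟨h₀, h⟩ (_ | i) hi
      · simpa using h₀
      · simpa using h i (by simpa using hi)
    · intro h
      exact ⟨by simpa using h 0 (by simp),
        fun i hi => by simpa using h (i + 1) (by simpa using hi)⟩

def words : ℕ → Finset (List Bool)
  | 0 => {[]}
  | n + 1 => (words n).image (List.cons false) ∪ (words n).image (List.cons true)

theorem mem_words {n : ℕ} {l : List Bool} : l ∈ words n ↔ l.length = n := by
  induction n generalizing l with
  | zero => simp [words]
  | succ n ih =>
    cases l with
    | nil => simp [words]
    | cons b l => cases b <;> simp [words, ih]

theorem sum_words_succ {β : Type*} [AddCommMonoid β] (n : ℕ) (f : List Bool → β) :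
    ∑ l ∈ words (n + 1), f l =
      ∑ l ∈ words n, f (false :: l) + ∑ l ∈ words n, f (true :: l) := by
  rw [words, sum_union, sum_image List.cons_injective.injOn, sum_image List.cons_injective.injOn]
  simp [Finset.disjoint_left]

noncomputable def wordPoly (n : ℕ) (a b p q : Bool) : ℤ[X] :=
  ∑ l ∈ words n, if avoidsFFF (a :: b :: (l ++ [p, q])) then X ^ l.count true else 0

theorem wordPoly_zero (a b p q : Bool) :
    wordPoly 0 a b p q = if (a || b || p) && (b || p || q) then 1 else 0 := by
  simp [wordPoly, words, avoidsFFF]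

theorem wordPoly_succ (n : ℕ) (a b p q : Bool) :
    wordPoly (n + 1) a b p q = (if a || b then wordPoly n b false p q else 0) +
      X * wordPoly n b true p q := by
  rw [wordPoly, sum_words_succ, wordPoly, wordPoly, mul_sum]
  congr 1
  · cases hab : a || b <;> simp [avoidsFFF, hab]
  · refine sum_congr rfl fun l _ => ?_
    simp [avoidsFFF, pow_succ, mul_comm]

-- `wordPoly_succ` is linear in the shifted sequences, so the recurrence propagates from `j = 0`.
theorem wordPoly_add_three (j : ℕ) (a b p q : Bool) :
    wordPoly (j + 3) a b p q =
      X * (wordPoly (j + 2) a b p q + wordPoly (j + 1) a b p q + wordPoly j a b p q) := by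
  induction j generalizing a b with
  | zero =>
    cases a <;> cases b <;> cases p <;> cases q <;>
      simp only [wordPoly_succ, wordPoly_zero, Bool.or_true, Bool.or_false, Bool.or_self,
        Bool.and_true, Bool.and_false, Bool.and_self, Bool.false_eq_true, ↓reduceIte, mul_one,
        add_zero] <;>
      ring
  | succ j ih =>
    rw [wordPoly_succ (j + 3) a b, ih, ih, wordPoly_succ (j + 2) a b, wordPoly_succ (j + 1) a b,
      wordPoly_succ j a b]
    split_ifs <;> ring

def toWord {m : ℕ} (S : Finset (Fin m)) : List Bool := List.ofFn (fun i => decide (i ∈ S))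

@[simp]
theorem length_toWord {m : ℕ} (S : Finset (Fin m)) : (toWord S).length = m := by
  simp [toWord]

theorem toWord_mem_words {m : ℕ} (S : Finset (Fin m)) : toWord S ∈ words m :=
  mem_words.2 (length_toWord S)

theorem count_toWord {m : ℕ} (S : Finset (Fin m)) : (toWord S).count true = #S := by
  rw [toWord, List.ofFn_eq_map, List.count_eq_length_filter, List.filter_map, List.length_map]
  conv_rhs => rw [← filter_univ_mem S, card_def, filter_val, val_univ_fin]
  simp [Function.comp_def]

theorem getD_toWord {m : ℕ} (S : Finset (Fin m)) {i : ℕ} (hi : i < m) :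
    (toWord S).getD i false = decide (⟨i, hi⟩ ∈ S) := by
  rw [toWord, List.getD_eq_getElem _ _ (by simpa using hi), List.getElem_ofFn]

theorem sum_toWord {β : Type*} [AddCommMonoid β] (m : ℕ) (f : List Bool → β) :
    ∑ S : Finset (Fin m), f (toWord S) = ∑ l ∈ words m, f l := by
  refine sum_nbij' toWord (fun l => ({v : Fin m | l.getD v false} : Finset (Fin m)))
    (fun S _ => toWord_mem_words S) (fun _ _ => mem_univ _) (fun S _ => ?_) (fun l hl => ?_)
    (fun _ _ => rfl)
  · ext v
    rw [mem_filter, getD_toWord S v.isLt]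
    simp
  · have hl : l.length = m := mem_words.1 hl
    refine List.ext_getElem (by simp [hl]) fun i h₁ h₂ => ?_
    simp [toWord, List.getElem?_eq_getElem h₂]

open Fin.NatCast in
theorem getD_toWord_append_take_two {m : ℕ} (S : Finset (Fin (m + 2))) {i : ℕ}
    (hi : i < m + 4) :
    (toWord S ++ (toWord S).take 2).getD i false = decide ((i : Fin (m + 2)) ∈ S) := by
  rcases lt_or_ge i (m + 2) with h | h
  · rw [List.getD_append _ _ _ _ (by rwa [length_toWord]), getD_toWord S h]
    rw [show (⟨i, h⟩ : Fin (m + 2)) = i from Fin.ext (by simp [Nat.mod_eq_of_lt h])]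
  · have h' : i - (m + 2) < m + 2 := by omega
    rw [List.getD_append_right _ _ _ _ (by rwa [length_toWord]), length_toWord,
      List.getD_eq_getElem?_getD, List.getElem?_take_of_lt (by omega),
      ← List.getD_eq_getElem?_getD, getD_toWord S h']
    rw [show (⟨i - (m + 2), h'⟩ : Fin (m + 2)) = i from
      Fin.ext (by simp [Nat.mod_eq_sub_mod h, Nat.mod_eq_of_lt h'])]

open Fin.NatCast in
theorem isDomSet_cycleGraph_iff_avoidsFFF {m : ℕ} (S : Finset (Fin (m + 2))) :
    IsDomSet (cycleGraph (m + 2)) S ↔ avoidsFFF (toWord S ++ (toWord S).take 2) = true := by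
  have hlen : (toWord S ++ (toWord S).take 2).length = m + 4 := by simp
  have hwindow : ∀ i < m + 2,
      ((toWord S ++ (toWord S).take 2).getD i false ||
        (toWord S ++ (toWord S).take 2).getD (i + 1) false ||
        (toWord S ++ (toWord S).take 2).getD (i + 2) false) = true ↔
      (i : Fin (m + 2)) ∈ S ∨ (i : Fin (m + 2)) + 1 ∈ S ∨ (i : Fin (m + 2)) + 1 + 1 ∈ S := by
    intro i hi
    rw [getD_toWord_append_take_two S (by omega), getD_toWord_append_take_two S (by omega),
      getD_toWord_append_take_two S (by omega)]
    simp [add_assoc, one_add_one_eq_two, or_assoc]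
  rw [isDomSet_cycleGraph_iff, avoidsFFF_iff, hlen]
  refine ⟨fun h i hi => (hwindow i (by omega)).2 (h i), fun h v => ?_⟩
  simpa using (hwindow v v.isLt).1 (h v (by omega))

theorem domPoly_cycleGraph_eq (n : ℕ) :
    domPoly (cycleGraph (n + 2)) = wordPoly n false false false false +
      X * wordPoly n false true false true + X * wordPoly n true false true false +
      X ^ 2 * wordPoly n true true true true := by
  classical
  rw [domPoly_eq_sum, sum_filter]
  simp only [isDomSet_cycleGraph_iff_avoidsFFF, ← count_toWord]
  rw [sum_toWord (n + 2) (fun l => if avoidsFFF (l ++ l.take 2) then X ^ l.count true else 0)]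
  simp only [sum_words_succ, wordPoly, mul_sum]
  simp [pow_succ, mul_comm, mul_assoc, add_assoc]

theorem domPoly_cycleGraph_add_five (m : ℕ) :
    domPoly (cycleGraph (m + 5)) = X * (domPoly (cycleGraph (m + 4)) +
      domPoly (cycleGraph (m + 3)) + domPoly (cycleGraph (m + 2))) := by
  simp only [domPoly_cycleGraph_eq, wordPoly_add_three]
  ring

noncomputable def jet (p : ℤ[X]) : ℤ × ℤ × ℤ :=
  (p.eval (-1), (derivative p).eval (-1), (derivative (derivative p)).eval (-1))

theorem jet_add (p q : ℤ[X]) : jet (p + q) = jet p + jet q := by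
  simp [jet]

theorem jet_mul {p q : ℤ[X]} {a b c a' b' c' : ℤ} (hp : jet p = (a, b, c))
    (hq : jet q = (a', b', c')) :
    jet (p * q) = (a * a', b * a' + a * b', c * a' + 2 * b * b' + a * c') := by
  simp only [jet, Prod.mk.injEq] at hp hq
  obtain ⟨ha, hb, hc⟩ := hp
  obtain ⟨ha', hb', hc'⟩ := hq
  simp only [jet, derivative_mul, derivative_add, eval_add, eval_mul, ha, hb, hc, ha', hb', hc',
    Prod.mk.injEq, true_and]
  ring

theorem jet_X : jet X = (-1, 1, 0) := by
  simp [jet]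

theorem jet_X_mul {p : ℤ[X]} {a b c : ℤ} (h : jet p = (a, b, c)) :
    jet (X * p) = (-a, a - b, 2 * b - c) := by
  rw [jet_mul jet_X h, Prod.mk.injEq, Prod.mk.injEq]
  exact ⟨by ring, by ring, by ring⟩

theorem jet_domPoly_cycleGraph_add_five {m : ℕ} {a b c a' b' c' a'' b'' c'' : ℤ}
    (h₂ : jet (domPoly (cycleGraph (m + 2))) = (a, b, c))
    (h₃ : jet (domPoly (cycleGraph (m + 3))) = (a', b', c'))
    (h₄ : jet (domPoly (cycleGraph (m + 4))) = (a'', b'', c'')) :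
    jet (domPoly (cycleGraph (m + 5))) = (-(a + a' + a''), (a + a' + a'') - (b + b' + b''),
      2 * (b + b' + b'') - (c + c' + c'')) := by
  rw [domPoly_cycleGraph_add_five, jet_X_mul]
  rw [jet_add, jet_add, h₄, h₃, h₂]
  simp only [Prod.mk_add_mk, Prod.mk.injEq]
  exact ⟨by ring, by ring, by ring⟩

theorem jet_domPoly_cycleGraph (t : ℕ) :
    jet (domPoly (cycleGraph (4 * t + 2))) = (-1, 0, (2 * (t : ℤ) + 1) * (2 * (t : ℤ) + 2)) ∧
    jet (domPoly (cycleGraph (4 * t + 3))) = (-1, 0, 0) ∧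
    jet (domPoly (cycleGraph (4 * t + 4))) = (3, -(4 * (t : ℤ) + 4), 4 * (t : ℤ) * (t + 1)) ∧
    jet (domPoly (cycleGraph (4 * t + 5))) =
      (-1, 4 * (t : ℤ) + 5, -((4 * (t : ℤ) + 5) * (2 * (t : ℤ) + 2))) := by
  induction t with
  | zero =>
    have h₂ : jet (domPoly (cycleGraph 2)) = (-1, 0, 2) := by
      simp [domPoly_cycleGraph_eq 0, wordPoly_zero, jet]
    have h₃ : jet (domPoly (cycleGraph 3)) = (-1, 0, 0) := by
      simp [domPoly_cycleGraph_eq 1, wordPoly_succ, wordPoly_zero, jet, derivative_mul]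
    have h₄ : jet (domPoly (cycleGraph 4)) = (3, -4, 0) := by
      simp [domPoly_cycleGraph_eq 2, wordPoly_succ, wordPoly_zero, jet, derivative_mul]
    refine ⟨h₂, h₃, h₄, ?_⟩
    rw [jet_domPoly_cycleGraph_add_five h₂ h₃ h₄]
    norm_num
  | succ t ih =>
    obtain ⟨h₂, h₃, h₄, h₅⟩ := ih
    have h₆ := jet_domPoly_cycleGraph_add_five h₃ h₄ h₅
    have h₇ := jet_domPoly_cycleGraph_add_five h₄ h₅ h₆
    have h₈ := jet_domPoly_cycleGraph_add_five h₅ h₆ h₇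
    have h₉ := jet_domPoly_cycleGraph_add_five h₆ h₇ h₈
    refine ⟨h₆.trans ?_, h₇.trans ?_, h₈.trans ?_, h₉.trans ?_⟩ <;>
      simp only [Prod.mk.injEq] <;> refine ⟨?_, ?_, ?_⟩ <;> push_cast <;> ring

theorem no_three_cycle_factorization_two_mod_four_general (n n₁ n₂ n₃ : ℕ)
    (hsum : n₁ + n₂ + n₃ = n)
    (hn₁ : n₁ % 4 = 2) (hn₂ : n₂ % 4 = 2) (hn₃ : n₃ % 4 = 2) :
    domPoly (cycleGraph n) ≠
      domPoly (cycleGraph n₁) * domPoly (cycleGraph n₂) * domPoly (cycleGraph n₃) := by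
  intro h
  obtain ⟨k₁, rfl⟩ : ∃ k, n₁ = 4 * k + 2 := ⟨n₁ / 4, by omega⟩
  obtain ⟨k₂, rfl⟩ : ∃ k, n₂ = 4 * k + 2 := ⟨n₂ / 4, by omega⟩
  obtain ⟨k₃, rfl⟩ : ∃ k, n₃ = 4 * k + 2 := ⟨n₃ / 4, by omega⟩
  obtain rfl : n = 4 * (k₁ + k₂ + k₃ + 1) + 2 := by omega
  have hjet := jet_mul (jet_mul (jet_domPoly_cycleGraph k₁).1 (jet_domPoly_cycleGraph k₂).1)
    (jet_domPoly_cycleGraph k₃).1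
  rw [← h, (jet_domPoly_cycleGraph _).1, Prod.mk.injEq, Prod.mk.injEq] at hjet
  obtain ⟨-, -, hsecond⟩ := hjet
  push_cast at hsecond
  nlinarith

theorem no_three_cycle_factorization_two_mod_four (n n₁ n₂ n₃ : ℕ)
    (h₁ : 0 < n₁) (h₂ : 0 < n₂) (h₃ : 0 < n₃) (hsum : n₁ + n₂ + n₃ = n)
    (hn : n % 4 = 2) (hn₁ : n₁ % 4 = 2) (hn₂ : n₂ % 4 = 2) (hn₃ : n₃ % 4 = 2) :
    domPoly (cycleGraph n) ≠
      domPoly (cycleGraph n₁) * domPoly (cycleGraph n₂) * domPoly (cycleGraph n₃) :=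
  no_three_cycle_factorization_two_mod_four_general n n₁ n₂ n₃ hsum hn₁ hn₂ hn₃
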